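/- arXiv:2201.07528 — 4 statements merged into one kernel-verified Lean document; each statement's English description precedes it below -/
import Mathlib

section
/- Let G be a finite subcubic class two graph and let f be a minimal colouring of G. Then for each conflicting edge e with regard to f, there exists a minimal conflicting subgraph of G which contains e and contains no other conflicting edge with regard to f. -/
open SimpleGraph

variable {V : Type*}

/-- Two edges (of a graph) are adjacent if they are distinct and share a vertex. -/
def EdgesAdj (e₁ e₂ : Sym2 V) : Prop := e₁ ≠ e₂ ∧ ∃ v, v ∈ e₁ ∧ v ∈ e₂

/-- `f` is a proper edge colouring of `G`: adjacent edges of `G` get distinct colours. -/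
def IsProperEC (G : SimpleGraph V) {α : Type*} (f : Sym2 V → α) : Prop :=
  ∀ e₁ ∈ G.edgeSet, ∀ e₂ ∈ G.edgeSet, EdgesAdj e₁ e₂ → f e₁ ≠ f e₂

/-- `G` is 3-edge-colourable. -/
def ThreeEC (G : SimpleGraph V) : Prop := ∃ f : Sym2 V → Fin 3, IsProperEC G f

/-- The degree of a vertex. -/
noncomputable def deg (G : SimpleGraph V) (v : V) : ℕ := Nat.card (G.neighborSet v)

/-- Every vertex has degree at most 3. -/
def Subcubic (G : SimpleGraph V) : Prop := ∀ v, deg G v ≤ 3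

/-- Every vertex has degree exactly 3. -/
def CubicGraph (G : SimpleGraph V) : Prop := ∀ v, deg G v = 3

/-- The resistance of `G`: the minimum number of edges whose removal from `G`
yields a 3-edge-colourable graph. -/
noncomputable def resistance (G : SimpleGraph V) : ℕ :=
  sInf {n | ∃ R : Set (Sym2 V), R.ncard = n ∧ ThreeEC (G.deleteEdges R)}

/-- `M` is a minimal conflicting subgraph of `G`: a subgraph of `G` that is not
3-edge-colourable, but `M − e` is 3-edge-colourable for every edge `e` of `M`. -/
def MinConfl (G M : SimpleGraph V) : Prop :=
  M ≤ G ∧ ¬ ThreeEC M ∧ ∀ e ∈ M.edgeSet, ThreeEC (M.deleteEdges {e})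

/-- `R` is a representative conflicting subset of `G`: a set of edges of `G`
containing at least one edge from every minimal conflicting subgraph of `G`. -/
def RepConfl (G : SimpleGraph V) (R : Set (Sym2 V)) : Prop :=
  R ⊆ G.edgeSet ∧ ∀ M : SimpleGraph V, MinConfl G M → (R ∩ M.edgeSet).Nonempty

/-- A minimal colouring of `G`: a proper 4-edge-colouring (colour `0` playing the role
of the fourth colour) in which exactly `resistance G` edges of `G` receive colour `0`. -/
def IsMinimalColoring (G : SimpleGraph V) (f : Sym2 V → Fin 4) : Prop :=
  IsProperEC G f ∧ {e | e ∈ G.edgeSet ∧ f e = 0}.ncard = resistance G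

/-!
Proof idea: removing all conflicting edges of a minimal colouring `f` leaves a graph that is
3-edge-coloured by `f`, while keeping back one conflicting edge `e` must leave a class two graph,
since otherwise `resistance G` edges would not be needed. Any minimal conflicting subgraph of
the latter graph therefore contains `e` and no other conflicting edge.
-/

section

variable {G H M : SimpleGraph V}

theorem ThreeEC.mono (hH : ThreeEC H) (h : G.edgeSet ⊆ H.edgeSet) : ThreeEC G := by
  obtain ⟨g, hg⟩ := hH
  exact ⟨g, fun e₁ h₁ e₂ h₂ hadj => hg e₁ (h h₁) e₂ (h h₂) hadj⟩

theorem MinConfl.of_le (hM : MinConfl H M) (hHG : H ≤ G) : MinConfl G M :=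
  ⟨hM.1.trans hHG, hM.2⟩

theorem exists_minConfl [Finite V] (hG : ¬ ThreeEC G) : ∃ M, MinConfl G M := by
  induction h : G.edgeSet.ncard using Nat.strong_induction_on generalizing G with
  | _ n ih =>
    by_cases hmin : ∀ e ∈ G.edgeSet, ThreeEC (G.deleteEdges {e})
    · exact ⟨G, le_rfl, hG, hmin⟩
    push Not at hmin
    obtain ⟨e, he, hGe⟩ := hmin
    have hlt : (G.deleteEdges {e}).edgeSet.ncard < n := by
      rw [edgeSet_deleteEdges, ← h]
      exact Set.ncard_sdiff_singleton_lt_of_mem he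
    obtain ⟨M, hM⟩ := ih _ hlt hGe rfl
    exact ⟨M, hM.of_le (deleteEdges_le _)⟩

theorem resistance_le {R : Set (Sym2 V)} (hR : ThreeEC (G.deleteEdges R)) :
    resistance G ≤ R.ncard :=
  Nat.sInf_le ⟨R, rfl, hR⟩

def conflictingEdges (G : SimpleGraph V) (f : Sym2 V → Fin 4) : Set (Sym2 V) :=
  {e | e ∈ G.edgeSet ∧ f e = 0}

theorem threeEC_deleteEdges_conflictingEdges {f : Sym2 V → Fin 4} (hf : IsProperEC G f) :
    ThreeEC (G.deleteEdges (conflictingEdges G f)) := by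
  -- `Fin.predAbove 0` merges colour `0` with colour `1` and is injective on the other colours.
  have hinj : ∀ c d : Fin 4, c ≠ 0 → d ≠ 0 → c ≠ d → Fin.predAbove 0 c ≠ Fin.predAbove 0 d := by
    decide
  refine ⟨fun a => Fin.predAbove 0 (f a), fun e₁ h₁ e₂ h₂ hadj => ?_⟩
  rw [edgeSet_deleteEdges] at h₁ h₂
  exact hinj _ _ (fun h => h₁.2 ⟨h₁.1, h⟩) (fun h => h₂.2 ⟨h₂.1, h⟩) (hf e₁ h₁.1 e₂ h₂.1 hadj)

theorem IsMinimalColoring.not_threeEC_deleteEdges_diff [Finite V] {f : Sym2 V → Fin 4}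
    (hf : IsMinimalColoring G f) {e : Sym2 V} (he : e ∈ conflictingEdges G f) :
    ¬ ThreeEC (G.deleteEdges (conflictingEdges G f \ {e})) := fun h => by
  have hle := resistance_le h
  rw [Set.ncard_sdiff_singleton_of_mem he] at hle
  have hpos : 0 < (conflictingEdges G f).ncard := (Set.ncard_pos (Set.toFinite _)).mpr ⟨e, he⟩
  have hcard : (conflictingEdges G f).ncard = resistance G := hf.2
  omega

end

theorem stmt_2_general {V : Type*} [Fintype V] (G : SimpleGraph V)
    (f : Sym2 V → Fin 4) (hf : IsMinimalColoring G f)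
    (e : Sym2 V) (he : e ∈ G.edgeSet) (he0 : f e = 0) :
    ∃ M : SimpleGraph V, MinConfl G M ∧ e ∈ M.edgeSet ∧
      ∀ e' ∈ M.edgeSet, f e' = 0 → e' = e := by
  set C := conflictingEdges G f
  have heC : e ∈ C := ⟨he, he0⟩
  obtain ⟨M, hM⟩ := exists_minConfl (hf.not_threeEC_deleteEdges_diff heC)
  have hMsub : M.edgeSet ⊆ G.edgeSet \ (C \ {e}) := by
    simpa only [edgeSet_deleteEdges] using edgeSet_mono hM.1
  have hMconfl : ∀ e' ∈ M.edgeSet, f e' = 0 → e' = e := fun e' he' hfe' => by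
    by_contra hne
    exact (hMsub he').2 ⟨⟨(hMsub he').1, hfe'⟩, hne⟩
  refine ⟨M, hM.of_le (deleteEdges_le _), ?_, hMconfl⟩
  by_contra heM
  refine hM.2.1 ((threeEC_deleteEdges_conflictingEdges hf.1).mono fun a ha => ?_)
  rw [edgeSet_deleteEdges]
  exact ⟨(hMsub ha).1, fun haC => heM (hMconfl a ha haC.2 ▸ ha)⟩

/-- For a minimal colouring `f` of a finite subcubic class two graph `G`, each conflicting
edge `e` lies in a minimal conflicting subgraph containing no other conflicting edge. -/
theorem stmt_2 {V : Type*} [Fintype V] (G : SimpleGraph V)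
    (hsub : Subcubic G) (hclass2 : ¬ ThreeEC G)
    (f : Sym2 V → Fin 4) (hf : IsMinimalColoring G f)
    (e : Sym2 V) (he : e ∈ G.edgeSet) (he0 : f e = 0) :
    ∃ M : SimpleGraph V, MinConfl G M ∧ e ∈ M.edgeSet ∧
      ∀ e' ∈ M.edgeSet, f e' = 0 → e' = e :=
  stmt_2_general G f hf e he he0
end

section
/- Let G be a finite cubic graph and let M and M' be two minimal conflicting subgraphs of G that share no edge. Then M and M' share no vertex. -/
/-!
A minimal conflicting subgraph `M` of a subcubic graph has no vertex of degree one: if `v` had a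
single neighbour `w`, the edge `vw` would meet at most two other edges of `M` (those at `w`),
so a 3-edge-colouring of `M - vw` would extend to `M` by giving `vw` a colour missing there.
Hence every vertex of `M` has degree at least two in `M`. A common vertex of two edge-disjoint
minimal conflicting subgraphs would therefore have degree at least four in the cubic graph.
-/

open SimpleGraph

variable {V : Type*}

lemma EdgesAdj.symm {e₁ e₂ : Sym2 V} (h : EdgesAdj e₁ e₂) : EdgesAdj e₂ e₁ :=
  ⟨h.1.symm, h.2.imp fun _ hv => hv.symm⟩

lemma deg_eq_ncard (G : SimpleGraph V) (v : V) : deg G v = (G.neighborSet v).ncard := rfl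

lemma CubicGraph.subcubic {G : SimpleGraph V} (hG : CubicGraph G) : Subcubic G :=
  fun v => (hG v).le

lemma IsProperEC.update [DecidableEq V] {α : Type*} {G : SimpleGraph V} {f : Sym2 V → α}
    {e : Sym2 V} (hf : IsProperEC (G.deleteEdges {e}) f) {c : α}
    (hc : ∀ e' ∈ G.edgeSet, EdgesAdj e e' → f e' ≠ c) :
    IsProperEC G (Function.update f e c) := by
  intro e₁ h₁ e₂ h₂ hadj
  by_cases h₁e : e₁ = e <;> by_cases h₂e : e₂ = e
  · exact absurd (h₁e.trans h₂e.symm) hadj.1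
  · subst h₁e
    rw [Function.update_self, Function.update_of_ne h₂e]
    exact (hc e₂ h₂ hadj).symm
  · subst h₂e
    rw [Function.update_self, Function.update_of_ne h₁e]
    exact hc e₁ h₁ hadj.symm
  · rw [Function.update_of_ne h₁e, Function.update_of_ne h₂e]
    exact hf e₁ (by rw [edgeSet_deleteEdges]; exact ⟨h₁, h₁e⟩)
      e₂ (by rw [edgeSet_deleteEdges]; exact ⟨h₂, h₂e⟩) hadj

section Finite

variable [Finite V]

lemma deg_le_deg_of_le {G H : SimpleGraph V} (hH : H ≤ G) (v : V) : deg H v ≤ deg G v :=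
  Set.ncard_le_ncard fun _ h => hH h

lemma Subcubic.mono {G H : SimpleGraph V} (hG : Subcubic G) (hH : H ≤ G) : Subcubic H :=
  fun v => (deg_le_deg_of_le hH v).trans (hG v)

lemma deg_add_deg_le_of_disjoint {G H H' : SimpleGraph V} (hH : H ≤ G) (hH' : H' ≤ G)
    (hdisj : Disjoint H.edgeSet H'.edgeSet) (v : V) : deg H v + deg H' v ≤ deg G v := by
  have hdisjN : Disjoint (H.neighborSet v) (H'.neighborSet v) :=
    Set.disjoint_left.mpr fun u hu hu' =>
      Set.disjoint_left.mp hdisj (show s(v, u) ∈ H.edgeSet from hu) hu'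
  simp only [deg_eq_ncard]
  rw [← Set.ncard_union_eq hdisjN]
  exact Set.ncard_le_ncard (Set.union_subset (fun _ h => hH h) fun _ h => hH' h)

lemma threeEC_of_threeEC_deleteEdges {M : SimpleGraph V} {e : Sym2 V}
    (hadj : {e' ∈ M.edgeSet | EdgesAdj e e'}.ncard ≤ 2) (h : ThreeEC (M.deleteEdges {e})) :
    ThreeEC M := by
  classical
  obtain ⟨f, hf⟩ := h
  obtain ⟨c, hc⟩ : ∃ c, c ∉ f '' {e' ∈ M.edgeSet | EdgesAdj e e'} := by
    by_contra! hall
    have hcard := (Set.ncard_image_le (f := f)).trans hadj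
    rw [Set.eq_univ_of_forall hall, Set.ncard_univ, Nat.card_eq_fintype_card,
      Fintype.card_fin] at hcard
    omega
  exact ⟨_, hf.update fun e' he' hee' hfc => hc ⟨e', ⟨he', hee'⟩, hfc⟩⟩

lemma ncard_edgesAdj_le_two_of_neighborSet_eq_singleton {M : SimpleGraph V} (hM : Subcubic M)
    {v w : V} (hv : M.neighborSet v = {w}) :
    {e' ∈ M.edgeSet | EdgesAdj s(v, w) e'}.ncard ≤ 2 := by
  have hvw : M.Adj v w := (hv.symm ▸ Set.mem_singleton w : w ∈ M.neighborSet v)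
  have hsub : {e' ∈ M.edgeSet | EdgesAdj s(v, w) e'} ⊆
      (fun x => s(w, x)) '' (M.neighborSet w \ {v}) := by
    rintro e' ⟨he', hne, u, hu, hue'⟩
    obtain ⟨x, rfl⟩ := Sym2.mem_iff_exists.mp hue'
    rcases Sym2.mem_iff.mp hu with rfl | rfl
    · have hx : x ∈ M.neighborSet u := he'
      rw [hv, Set.mem_singleton_iff] at hx
      exact absurd (by rw [hx]) hne
    · refine ⟨x, ⟨he', ?_⟩, rfl⟩
      rintro rfl
      exact hne Sym2.eq_swap
  calc _ ≤ ((fun x => s(w, x)) '' (M.neighborSet w \ {v})).ncard := Set.ncard_le_ncard hsub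
    _ ≤ (M.neighborSet w \ {v}).ncard := Set.ncard_image_le
    _ = deg M w - 1 := Set.ncard_sdiff_singleton_of_mem hvw.symm
    _ ≤ 2 := by have := hM w; omega

lemma two_le_deg_of_critical {M : SimpleGraph V} (hsub : Subcubic M) (hM : ¬ ThreeEC M)
    (hcrit : ∀ e ∈ M.edgeSet, ThreeEC (M.deleteEdges {e})) {v : V} (hv : v ∈ M.support) :
    2 ≤ deg M v := by
  by_contra! hlt
  obtain ⟨w, hw⟩ : ∃ w, M.neighborSet v = {w} := by
    have hpos : 0 < (M.neighborSet v).ncard := (Set.ncard_pos (Set.toFinite _)).mpr hv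
    rw [deg_eq_ncard] at hlt
    rw [← Set.ncard_eq_one]
    omega
  have hvw : s(v, w) ∈ M.edgeSet := (hw.symm ▸ Set.mem_singleton w : w ∈ M.neighborSet v)
  exact hM (threeEC_of_threeEC_deleteEdges
    (ncard_edgesAdj_le_two_of_neighborSet_eq_singleton hsub hw) (hcrit _ hvw))

end Finite

/-- Two edge-disjoint minimal conflicting subgraphs of a finite cubic graph
share no vertex. -/
theorem stmt_5 {V : Type*} [Fintype V] (G M M' : SimpleGraph V)
    (hcubic : CubicGraph G) (hM : MinConfl G M) (hM' : MinConfl G M')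
    (hdisj : Disjoint M.edgeSet M'.edgeSet) :
    Disjoint M.support M'.support := by
  refine Set.disjoint_left.mpr fun v hvM hvM' => ?_
  have hdeg := two_le_deg_of_critical (hcubic.subcubic.mono hM.1) hM.2.1 hM.2.2 hvM
  have hdeg' := two_le_deg_of_critical (hcubic.subcubic.mono hM'.1) hM'.2.1 hM'.2.2 hvM'
  have hsum := deg_add_deg_le_of_disjoint hM.1 hM'.1 hdisj v
  have := hcubic v
  omega
end

section
/- Let G be a finite subcubic class two graph and let f be a minimal colouring of G. Then the set R of conflicting edges with regard to f is a representative conflicting subset of G of minimal order, i.e. R contains at least one edge from every minimal conflicting subgraph of G and |R| is minimal among all such sets. -/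
open SimpleGraph

variable {V : Type*}

lemma threeEC_mono {V : Type*} {M H : SimpleGraph V} (h : M ≤ H) (hH : ThreeEC H) :
    ThreeEC M := by
  obtain ⟨g, hg⟩ := hH
  exact ⟨g, fun e₁ he₁ e₂ he₂ hadj =>
    hg e₁ (SimpleGraph.edgeSet_mono h he₁) e₂ (SimpleGraph.edgeSet_mono h he₂) hadj⟩

lemma exists_minConfl_s7 {V : Type*} [Fintype V] (H : SimpleGraph V) (h : ¬ ThreeEC H) :
    ∃ M, M ≤ H ∧ ¬ ThreeEC M ∧ ∀ e ∈ M.edgeSet, ThreeEC (M.deleteEdges {e}) := by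
  classical
  generalize hn : H.edgeSet.ncard = n
  induction n using Nat.strong_induction_on generalizing H with
  | _ n ih =>
    by_cases hall : ∀ e ∈ H.edgeSet, ThreeEC (H.deleteEdges {e})
    · exact ⟨H, le_refl H, h, hall⟩
    · push_neg at hall
      obtain ⟨e, he, hne⟩ := hall
      have hlt : (H.deleteEdges {e}).edgeSet.ncard < n := by
        rw [SimpleGraph.edgeSet_deleteEdges]
        subst hn
        exact Set.ncard_diff_singleton_lt_of_mem he (Set.toFinite _)
      obtain ⟨M, hM1, hM2, hM3⟩ := ih _ hlt (H.deleteEdges {e}) hne rfl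
      exact ⟨M, hM1.trans (SimpleGraph.deleteEdges_le _), hM2, hM3⟩

lemma threeEC_deleteEdges_confl {V : Type*} (G : SimpleGraph V) (f : Sym2 V → Fin 4)
    (hp : IsProperEC G f) : ThreeEC (G.deleteEdges {e | e ∈ G.edgeSet ∧ f e = 0}) := by
  refine ⟨fun e => if f e = 1 then 0 else if f e = 2 then 1 else 2, ?_⟩
  intro e₁ he₁ e₂ he₂ hadj
  rw [SimpleGraph.edgeSet_deleteEdges] at he₁ he₂
  have h1 := hp e₁ he₁.1 e₂ he₂.1 hadj
  have hz1 : f e₁ ≠ 0 := fun h0 => he₁.2 ⟨he₁.1, h0⟩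
  have hz2 : f e₂ ≠ 0 := fun h0 => he₂.2 ⟨he₂.1, h0⟩
  show (if f e₁ = 1 then (0:Fin 3) else if f e₁ = 2 then 1 else 2) ≠
    (if f e₂ = 1 then 0 else if f e₂ = 2 then 1 else 2)
  revert h1 hz1 hz2
  generalize f e₁ = a; generalize f e₂ = b
  revert a b; decide

/-- The set of conflicting edges of a minimal colouring of a finite subcubic class two graph
is a representative conflicting subset of minimal order. -/
theorem stmt_7 {V : Type*} [Fintype V] (G : SimpleGraph V)
    (hsub : Subcubic G) (hclass2 : ¬ ThreeEC G)
    (f : Sym2 V → Fin 4) (hf : IsMinimalColoring G f) :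
    RepConfl G {e | e ∈ G.edgeSet ∧ f e = 0} ∧
      ∀ R' : Set (Sym2 V), RepConfl G R' →
        {e | e ∈ G.edgeSet ∧ f e = 0}.ncard ≤ R'.ncard := by
  classical
  set R := {e | e ∈ G.edgeSet ∧ f e = 0} with hR
  have hRsub : R ⊆ G.edgeSet := fun e he => he.1
  have h3 : ThreeEC (G.deleteEdges R) := threeEC_deleteEdges_confl G f hf.1
  constructor
  · refine ⟨hRsub, fun M hM => ?_⟩
    by_contra hempty
    rw [Set.not_nonempty_iff_eq_empty] at hempty
    apply hM.2.1
    apply threeEC_mono _ h3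
    rw [← SimpleGraph.edgeSet_subset_edgeSet, SimpleGraph.edgeSet_deleteEdges]
    intro e heM
    refine ⟨SimpleGraph.edgeSet_mono hM.1 heM, fun heR => ?_⟩
    exact Set.eq_empty_iff_forall_notMem.mp hempty e ⟨heR, heM⟩
  · intro R' hR'
    have h3' : ThreeEC (G.deleteEdges R') := by
      by_contra hnot
      obtain ⟨M, hM1, hM2, hM3⟩ := exists_minConfl_s7 _ hnot
      have hMG : MinConfl G M := ⟨hM1.trans (SimpleGraph.deleteEdges_le _), hM2, hM3⟩
      obtain ⟨e, heR', heM⟩ := hR'.2 M hMG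
      have := SimpleGraph.edgeSet_mono hM1 heM
      rw [SimpleGraph.edgeSet_deleteEdges] at this
      exact this.2 heR'
    calc R.ncard = resistance G := hf.2
      _ ≤ R'.ncard := Nat.sInf_le ⟨R', rfl, h3'⟩
end

section
/- There exists no cubic dense cluster. Equivalently: there is no finite cubic class two graph G such that the collection of all minimal conflicting subgraphs of G forms a dense cluster, i.e. such that there exists an edge of G contained in every minimal conflicting subgraph of G. (This uses the fact that no cubic graph has resistance 1.) -/
open SimpleGraph

variable {V : Type*}

/-!
If an edge `uv` lay in every minimal conflicting subgraph, then `G - uv` would contain none, hence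
be 3-edge-colourable; so it suffices that a cubic graph has no resistance 1. In a 3-edge-colouring
of `G - uv` some colour `i` is missing at `u`. If `i` is also missing at `v`, give `uv` colour `i`.
Otherwise `i` is present at every vertex but `u`, so its colour class is a perfect matching of
`V - u` and `|V| - 1` is even, whereas `|V|` is even by the handshake lemma.
-/

section

variable {α : Type*} {G : SimpleGraph V}

def colourClass (G : SimpleGraph V) (c : Sym2 V → α) (i : α) : G.Subgraph where
  verts := {w | ∃ x, G.Adj w x ∧ c s(w, x) = i}
  Adj x y := G.Adj x y ∧ c s(x, y) = i
  adj_sub h := h.1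
  edge_vert h := ⟨_, h⟩
  symm := ⟨fun _ _ h => ⟨h.1.symm, Sym2.eq_swap ▸ h.2⟩⟩

lemma IsProperEC.ne_of_adj {c : Sym2 V → α} (hc : IsProperEC G c) {w x y : V}
    (hx : G.Adj w x) (hy : G.Adj w y) (hxy : x ≠ y) : c s(w, x) ≠ c s(w, y) :=
  hc _ hx _ hy ⟨Sym2.congr_right.not.2 hxy, w, Sym2.mem_mk_left _ _, Sym2.mem_mk_left _ _⟩

lemma IsProperEC.isMatching_colourClass {c : Sym2 V → α} (hc : IsProperEC G c) (i : α) :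
    (colourClass G c i).IsMatching := by
  rintro w ⟨x, hx⟩
  refine ⟨x, hx, fun y hy => ?_⟩
  by_contra hyx
  exact hc.ne_of_adj hy.1 hx.1 hyx (hy.2.trans hx.2.symm)

lemma IsProperEC.mem_colourClass_verts {c : Sym2 V → Fin 3} (hc : IsProperEC G c) {w : V}
    (hw : deg G w = 3) (i : Fin 3) : w ∈ (colourClass G c i).verts := by
  have hinj : Function.Injective fun x : G.neighborSet w => c s(w, x) := fun x y hxy =>
    Subtype.ext (by_contra fun hne => hc.ne_of_adj x.2 y.2 hne hxy)
  obtain ⟨x, hx⟩ := (hinj.bijective_of_nat_card_le (by rw [Nat.card_fin]; exact hw.ge)).2 i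
  exact ⟨x, x.2, hx⟩

lemma exists_notMem_colourClass_verts [Finite V] (c : Sym2 V → Fin 3) {w : V}
    (hw : deg G w < 3) : ∃ i, w ∉ (colourClass G c i).verts := by
  by_contra! h
  have hsurj : Function.Surjective fun x : G.neighborSet w => c s(w, x) := fun i => by
    obtain ⟨x, hx, hxi⟩ := h i
    exact ⟨⟨x, hx⟩, hxi⟩
  have := Nat.card_le_card_of_surjective _ hsurj
  rw [Nat.card_fin] at this
  exact hw.not_ge this

lemma IsProperEC.update_of_notMem_colourClass_verts [DecidableEq V] {c : Sym2 V → α} {u v : V}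
    (hc : IsProperEC (G.deleteEdges {s(u, v)}) c) {i : α}
    (hu : u ∉ (colourClass (G.deleteEdges {s(u, v)}) c i).verts)
    (hv : v ∉ (colourClass (G.deleteEdges {s(u, v)}) c i).verts) :
    IsProperEC G (Function.update c s(u, v) i) := by
  have hmissing : ∀ a ∈ G.edgeSet, a ≠ s(u, v) → ∀ w ∈ s(u, v), w ∈ a → c a ≠ i := by
    intro a ha hne w hw hwa
    obtain ⟨x, rfl⟩ := Sym2.mem_iff_exists.1 hwa
    have hx : (G.deleteEdges {s(u, v)}).Adj w x := deleteEdges_adj.2 ⟨ha, hne⟩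
    rcases Sym2.mem_iff.1 hw with rfl | rfl
    exacts [fun h => hu ⟨x, hx, h⟩, fun h => hv ⟨x, hx, h⟩]
  rintro a₁ h₁ a₂ h₂ ⟨hne, w, hw₁, hw₂⟩
  rcases eq_or_ne a₁ s(u, v) with rfl | e₁ <;> rcases eq_or_ne a₂ s(u, v) with rfl | e₂
  · exact absurd rfl hne
  · rw [Function.update_self, Function.update_of_ne e₂]
    exact (hmissing a₂ h₂ e₂ w hw₁ hw₂).symm
  · rw [Function.update_self, Function.update_of_ne e₁]
    exact hmissing a₁ h₁ e₁ w hw₂ hw₁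
  · rw [Function.update_of_ne e₁, Function.update_of_ne e₂]
    exact hc a₁ (by simpa using ⟨h₁, e₁⟩) a₂ (by simpa using ⟨h₂, e₂⟩) ⟨hne, w, hw₁, hw₂⟩

lemma deg_deleteEdges_of_notMem {e : Sym2 V} {w : V} (hw : w ∉ e) :
    deg (G.deleteEdges {e}) w = deg G w := by
  have : (G.deleteEdges {e}).neighborSet w = G.neighborSet w := by
    ext x
    simp only [mem_neighborSet, deleteEdges_adj, Set.mem_singleton_iff, and_iff_left_iff_imp]
    rintro - rfl
    exact hw (Sym2.mem_mk_left _ _)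
  rw [deg, deg, this]

lemma deg_deleteEdges_lt [Finite V] {e : Sym2 V} (he : e ∈ G.edgeSet) {w : V} (hw : w ∈ e) :
    deg (G.deleteEdges {e}) w < deg G w := by
  obtain ⟨x, rfl⟩ := Sym2.mem_iff_exists.1 hw
  rw [deg, deg, Nat.card_coe_set_eq, Nat.card_coe_set_eq]
  refine Set.ncard_lt_ncard ⟨fun y hy => hy.1, fun hsub => ?_⟩
  simpa using hsub (show x ∈ G.neighborSet w from he)

lemma CubicGraph.even_card [Fintype V] (hG : CubicGraph G) : Even (Fintype.card V) := by
  classical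
  have hodd : ∀ w, Odd (G.degree w) := fun w => by
    rw [← card_neighborSet_eq_degree, ← Nat.card_eq_fintype_card, ← deg, hG w]
    decide
  simpa [hodd] using G.even_card_odd_degree_vertices

theorem CubicGraph.threeEC_of_threeEC_deleteEdges [Fintype V] (hG : CubicGraph G) {u v : V}
    (huv : G.Adj u v) (h : ThreeEC (G.deleteEdges {s(u, v)})) : ThreeEC G := by
  classical
  obtain ⟨c, hc⟩ := h
  obtain ⟨i, hu⟩ := exists_notMem_colourClass_verts c
    ((deg_deleteEdges_lt huv (Sym2.mem_mk_left u v)).trans_eq (hG u))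
  by_cases hv : v ∈ (colourClass (G.deleteEdges {s(u, v)}) c i).verts
  · exfalso
    have hverts : (colourClass (G.deleteEdges {s(u, v)}) c i).verts = {u}ᶜ := by
      ext w
      refine ⟨fun hw hwu => hu (hwu ▸ hw), fun hwu => ?_⟩
      by_cases hwv : w = v
      · exact hwv ▸ hv
      refine hc.mem_colourClass_verts ?_ i
      rw [deg_deleteEdges_of_notMem (by simp [Set.mem_compl_singleton_iff.1 hwu, hwv]), hG w]
    have hmatch := (hc.isMatching_colourClass i).even_card
    simp only [hverts, Set.toFinset_compl, Set.toFinset_singleton, Finset.card_compl,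
      Finset.card_singleton] at hmatch
    obtain ⟨k, hk⟩ := hmatch
    obtain ⟨m, hm⟩ := hG.even_card
    have : 0 < Fintype.card V := Fintype.card_pos_iff.2 ⟨u⟩
    omega
  · exact ⟨_, hc.update_of_notMem_colourClass_verts hu hv⟩

lemma exists_minConfl_le [Finite V] {H : SimpleGraph V} (hH : ¬ ThreeEC H) :
    ∃ M ≤ H, MinConfl H M := by
  obtain ⟨M, hMH, hmin⟩ := exists_minimal_le_of_wellFoundedLT (fun M => M ≤ H ∧ ¬ ThreeEC M) H
    ⟨le_rfl, hH⟩
  refine ⟨M, hMH, hMH, hmin.1.2, fun e he => ?_⟩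
  by_contra hM'
  have := hmin.2 ⟨(deleteEdges_le _).trans hMH, hM'⟩ (deleteEdges_le _)
  simpa using edgeSet_mono this he

end

/-- There is no cubic dense cluster: no finite cubic class two graph has an edge contained
in every one of its minimal conflicting subgraphs. -/
theorem stmt_11 {V : Type*} [Fintype V] (G : SimpleGraph V)
    (hcubic : CubicGraph G) (hclass2 : ¬ ThreeEC G) :
    ¬ ∃ e ∈ G.edgeSet, ∀ M : SimpleGraph V, MinConfl G M → e ∈ M.edgeSet := by
  rintro ⟨e, he, hall⟩
  induction e with | _ u v =>
  refine hclass2 (hcubic.threeEC_of_threeEC_deleteEdges he (by_contra fun h => ?_))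
  obtain ⟨M, hM, hMmin⟩ := exists_minConfl_le h
  have heM := edgeSet_mono hM (hall M ⟨hM.trans (deleteEdges_le _), hMmin.2⟩)
  simp at heM
end
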